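/- arXiv:1707.08419 — 3 statements merged into one kernel-verified Lean document; each statement's English description precedes it below -/
import Mathlib

section
/- Assume (A_n)_{n≥0} is γ-periodic (A_{n+γ} = A_n for all n) with γ ≥ 2, and that there exist 0 ≤ l, m ≤ γ−1 with A_l ≠ A_m. Then there is no probability measure ν on E with the following property: there exists a probability measure μ on E such that P_μ(τ > n) > 0 for all n and P_μ(X_n ∈ · | τ > n) converges to ν as n → ∞. In other words, no quasi-limiting distribution exists. -/
open Filter

variable {E : Type*}

/-- Dirac mass at `x`. -/
def dirac [DecidableEq E] (x : E) : E → ℝ := fun y => if y = x then 1 else 0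

/-- `mdist P A μ n y = P_μ(X_n = y, τ > n)` for the Markov chain with transition matrix `P`
killed on the moving boundary `(A n)`, i.e. `τ = inf {n | X n ∈ A n}`. -/
noncomputable def mdist [Fintype E] [DecidableEq E] (P : E → E → ℝ) (A : ℕ → Finset E)
    (μ : E → ℝ) : ℕ → E → ℝ
  | 0 => fun y => if y ∈ A 0 then 0 else μ y
  | n + 1 => fun y => if y ∈ A (n + 1) then 0 else ∑ x, mdist P A μ n x * P x y

/-- `P_μ(τ > n)`. -/
noncomputable def surv [Fintype E] [DecidableEq E] (P : E → E → ℝ) (A : ℕ → Finset E)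
    (μ : E → ℝ) (n : ℕ) : ℝ :=
  ∑ y, mdist P A μ n y

/-- `P_μ(X_n = · | τ > n)`. -/
noncomputable def condDist [Fintype E] [DecidableEq E] (P : E → E → ℝ) (A : ℕ → Finset E)
    (μ : E → ℝ) (n : ℕ) : E → ℝ :=
  fun y => mdist P A μ n y / surv P A μ n

/-- `μ` is a probability measure on the finite set `E`. -/
def IsProbVec [Fintype E] (μ : E → ℝ) : Prop := (∀ x, 0 ≤ μ x) ∧ ∑ x, μ x = 1

/-- `P` is a Markov transition matrix on `E`. -/
def IsTransMat [Fintype E] (P : E → E → ℝ) : Prop := (∀ x y, 0 ≤ P x y) ∧ ∀ x, ∑ y, P x y = 1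

lemma mdist_nonneg [Fintype E] [DecidableEq E] {P : E → E → ℝ} (hP : ∀ x y, 0 ≤ P x y)
    (A : ℕ → Finset E) {μ : E → ℝ} (hμ : ∀ x, 0 ≤ μ x) :
    ∀ n y, 0 ≤ mdist P A μ n y := by
  intro n
  induction n with
  | zero =>
    intro y
    simp only [mdist]
    split_ifs
    · exact le_rfl
    · exact hμ y
  | succ n ih =>
    intro y
    simp only [mdist]
    split_ifs
    · exact le_rfl
    · exact Finset.sum_nonneg fun x _ => mul_nonneg (ih x) (hP x y)

lemma mdist_succ [Fintype E] [DecidableEq E] (P : E → E → ℝ) (A : ℕ → Finset E)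
    (μ : E → ℝ) (n : ℕ) (y : E) :
    mdist P A μ (n + 1) y = if y ∈ A (n + 1) then 0 else ∑ x, mdist P A μ n x * P x y := by
  simp only [mdist]

lemma mdist_zero_of_mem [Fintype E] [DecidableEq E] {P : E → E → ℝ} {A : ℕ → Finset E}
    {μ : E → ℝ} {n : ℕ} {y : E} (hy : y ∈ A n) : mdist P A μ n y = 0 := by
  cases n with
  | zero => simp [mdist, hy]
  | succ n => simp [mdist, hy]

lemma mdist_dirac_le [Fintype E] [DecidableEq E] {P : E → E → ℝ} (hP : ∀ x y, 0 ≤ P x y)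
    (A : ℕ → Finset E) {ν : E → ℝ} (hν : ∀ x, 0 ≤ ν x) (x₀ : E) :
    ∀ n y, ν x₀ * mdist P A (dirac x₀) n y ≤ mdist P A ν n y := by
  intro n
  induction n with
  | zero =>
    intro y
    simp only [mdist, dirac]
    split_ifs with h h2
    · simp
    · rw [h2, mul_one]
    · simp [hν y]
  | succ n ih =>
    intro y
    simp only [mdist]
    split_ifs with h
    · simp
    · rw [Finset.mul_sum]
      refine Finset.sum_le_sum fun x _ => ?_
      rw [← mul_assoc]
      exact mul_le_mul_of_nonneg_right (ih x) (hP x y)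

/-- If the moving killing boundary `(A_n)` is `γ`-periodic (`γ ≥ 2`) and not constant over a
period, then there is no quasi-limiting distribution: no probability measure `ν` such that
`P_μ(X_n ∈ · | τ > n) → ν` for some initial probability measure `μ` with
`P_μ(τ > n) > 0` for all `n`. -/
theorem no_quasi_limiting_distribution [Fintype E] [DecidableEq E]
    (P : E → E → ℝ) (hP : IsTransMat P) (A : ℕ → Finset E)
    (γ : ℕ) (hγ : 2 ≤ γ) (hper : ∀ n : ℕ, A (n + γ) = A n)
    (habs : ∀ x ∉ A 0, Tendsto (fun n => surv P A (dirac x) n) atTop (nhds 0))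
    (hirr : ∀ n : ℕ, ∀ x ∉ A n, ∀ y ∉ A n,
      ∃ m : ℕ, 0 < mdist P (fun _ => A n) (dirac x) m y)
    (hA : ∃ l < γ, ∃ m < γ, A l ≠ A m) :
    ¬ ∃ ν : E → ℝ, IsProbVec ν ∧
      ∃ μ : E → ℝ, IsProbVec μ ∧ (∀ n : ℕ, 0 < surv P A μ n) ∧
        ∀ y : E, Tendsto (fun n => condDist P A μ n y) atTop (nhds (ν y)) := by
  rintro ⟨ν, ⟨hν0, hν1⟩, μ, ⟨hμ0, hμ1⟩, hs, hconv⟩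
  obtain ⟨hP0, hP1⟩ := hP
  have hγpos : 0 < γ := by omega
  -- periodicity
  have hAper : ∀ q k : ℕ, A (q * γ + k) = A k := by
    intro q
    induction q with
    | zero => intro k; simp
    | succ q ih =>
      intro k
      have h : (q + 1) * γ + k = (q * γ + k) + γ := by ring
      rw [h, hper, ih]
  have hsub : ∀ j : ℕ, Tendsto (fun q : ℕ => q * γ + j) atTop atTop := by
    intro j
    refine tendsto_atTop_mono (fun q => ?_) tendsto_id
    show q ≤ q * γ + j
    have : q * 1 ≤ q * γ := Nat.mul_le_mul_left q hγpos
    omega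
  have hsne : ∀ n, surv P A μ n ≠ 0 := fun n => ne_of_gt (hs n)
  have hsum1 : ∀ n, ∑ y, condDist P A μ n y = 1 := by
    intro n
    unfold condDist
    rw [← Finset.sum_div]
    exact div_self (hsne n)
  -- key one-step identity for conditional distributions
  have key : ∀ n y, condDist P A μ (n + 1) y * (surv P A μ (n + 1) / surv P A μ n)
      = if y ∈ A (n + 1) then 0 else ∑ x, condDist P A μ n x * P x y := by
    intro n y
    by_cases hy : y ∈ A (n + 1)
    · rw [if_pos hy]
      unfold condDist
      rw [mdist_zero_of_mem hy]
      simp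
    · rw [if_neg hy]
      unfold condDist
      have hm : mdist P A μ (n + 1) y = ∑ x, mdist P A μ n x * P x y := by
        simp [mdist, hy]
      rw [hm]
      have h2 : ∑ x, mdist P A μ n x / surv P A μ n * P x y
          = (∑ x, mdist P A μ n x * P x y) / surv P A μ n := by
        rw [Finset.sum_div]
        exact Finset.sum_congr rfl fun x _ => div_mul_eq_mul_div _ _ _
      rw [h2]
      rw [div_mul_div_comm, mul_comm (∑ x, mdist P A μ n x * P x y) (surv P A μ (n + 1))]
      rw [mul_div_mul_left _ _ (hsne (n + 1))]
  -- survival ratio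
  have hr : ∀ n, surv P A μ (n + 1) / surv P A μ n
      = ∑ z, (if z ∈ A (n + 1) then (0 : ℝ) else ∑ x, condDist P A μ n x * P x z) := by
    intro n
    calc surv P A μ (n + 1) / surv P A μ n
        = (∑ z, condDist P A μ (n + 1) z) * (surv P A μ (n + 1) / surv P A μ n) := by
          rw [hsum1, one_mul]
      _ = ∑ z, condDist P A μ (n + 1) z * (surv P A μ (n + 1) / surv P A μ n) := by
          rw [Finset.sum_mul]
      _ = _ := Finset.sum_congr rfl fun z _ => key n z
  -- support of ν avoids every A k
  have hsupp : ∀ k y, y ∈ A k → ν y = 0 := by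
    intro k y hy
    have hz : ∀ q : ℕ, condDist P A μ (q * γ + k) y = 0 := by
      intro q
      unfold condDist
      rw [mdist_zero_of_mem (by rw [hAper q k]; exact hy), zero_div]
    have h1 : Tendsto (fun q : ℕ => condDist P A μ (q * γ + k) y) atTop (nhds (ν y)) :=
      (hconv y).comp (hsub k)
    have h2 : Tendsto (fun q : ℕ => condDist P A μ (q * γ + k) y) atTop (nhds 0) := by
      refine Tendsto.congr (fun q => (hz q).symm) tendsto_const_nhds
    exact tendsto_nhds_unique h1 h2
  -- limit of survival ratios along residue classes
  have hratio : ∀ j : ℕ, Tendsto (fun q : ℕ => surv P A μ (q * γ + j + 1) / surv P A μ (q * γ + j))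
      atTop (nhds (∑ z, (if z ∈ A (j + 1) then (0 : ℝ) else ∑ x, ν x * P x z))) := by
    intro j
    have hA1 : ∀ q : ℕ, A (q * γ + j + 1) = A (j + 1) := by
      intro q
      have h : q * γ + j + 1 = q * γ + (j + 1) := by ring
      rw [h, hAper]
    have hGlim : ∀ z : E, Tendsto
        (fun q : ℕ => if z ∈ A (j + 1) then (0 : ℝ) else ∑ x, condDist P A μ (q * γ + j) x * P x z)
        atTop (nhds (if z ∈ A (j + 1) then (0 : ℝ) else ∑ x, ν x * P x z)) := by
      intro z
      by_cases hz : z ∈ A (j + 1)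
      · simp only [if_pos hz]
        exact tendsto_const_nhds
      · simp only [if_neg hz]
        exact tendsto_finset_sum _ fun x _ => ((hconv x).comp (hsub j)).mul_const (P x z)
    have heq : ∀ q : ℕ, surv P A μ (q * γ + j + 1) / surv P A μ (q * γ + j)
        = ∑ z, (if z ∈ A (j + 1) then (0 : ℝ) else ∑ x, condDist P A μ (q * γ + j) x * P x z) := by
      intro q
      rw [hr (q * γ + j)]
      exact Finset.sum_congr rfl fun z _ => by rw [hA1 q]
    refine Tendsto.congr (fun q => (heq q).symm) ?_
    exact tendsto_finset_sum _ fun z _ => hGlim z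
  -- the quasi-stationarity relation
  have hR : ∀ j y, ν y * (∑ z, (if z ∈ A (j + 1) then (0 : ℝ) else ∑ x, ν x * P x z))
      = if y ∈ A (j + 1) then (0 : ℝ) else ∑ x, ν x * P x y := by
    intro j y
    have hA1 : ∀ q : ℕ, A (q * γ + j + 1) = A (j + 1) := by
      intro q
      have h : q * γ + j + 1 = q * γ + (j + 1) := by ring
      rw [h, hAper]
    have h1 : Tendsto (fun q : ℕ => condDist P A μ (q * γ + j + 1) y) atTop (nhds (ν y)) :=
      (hconv y).comp (hsub (j + 1))
    have hT1 : Tendsto (fun q : ℕ =>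
        condDist P A μ (q * γ + j + 1) y * (surv P A μ (q * γ + j + 1) / surv P A μ (q * γ + j)))
        atTop (nhds (ν y * (∑ z, (if z ∈ A (j + 1) then (0 : ℝ) else ∑ x, ν x * P x z)))) :=
      h1.mul (hratio j)
    have hT2 : Tendsto (fun q : ℕ =>
        condDist P A μ (q * γ + j + 1) y * (surv P A μ (q * γ + j + 1) / surv P A μ (q * γ + j)))
        atTop (nhds (if y ∈ A (j + 1) then (0 : ℝ) else ∑ x, ν x * P x y)) := by
      have heq : ∀ q : ℕ,
          condDist P A μ (q * γ + j + 1) y * (surv P A μ (q * γ + j + 1) / surv P A μ (q * γ + j))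
          = if y ∈ A (j + 1) then (0 : ℝ) else ∑ x, condDist P A μ (q * γ + j) x * P x y := by
        intro q
        rw [key (q * γ + j) y, hA1 q]
      refine Tendsto.congr (fun q => (heq q).symm) ?_
      by_cases hz : y ∈ A (j + 1)
      · simp only [if_pos hz]
        exact tendsto_const_nhds
      · simp only [if_neg hz]
        exact tendsto_finset_sum _ fun x _ => ((hconv x).comp (hsub j)).mul_const (P x y)
    exact tendsto_nhds_unique hT1 hT2
  -- a point in the support of ν
  obtain ⟨x₀, hx₀⟩ : ∃ x, 0 < ν x := by
    by_contra hc
    push_neg at hc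
    have : ∑ x, ν x = 0 := Finset.sum_eq_zero fun x _ => le_antisymm (hc x) (hν0 x)
    rw [hν1] at this
    norm_num at this
  have hx₀A : ∀ k, x₀ ∉ A k := by
    intro k hk
    have := hsupp k x₀ hk
    linarith
  have hGnn : ∀ k z, 0 ≤ if z ∈ A k then (0 : ℝ) else ∑ x, ν x * P x z := by
    intro k z
    split_ifs
    · exact le_rfl
    · exact Finset.sum_nonneg fun x _ => mul_nonneg (hν0 x) (hP0 x z)
  -- positivity of the rates
  have hΘpos : ∀ j : ℕ, 0 < ∑ z, (if z ∈ A (j + 1) then (0 : ℝ) else ∑ x, ν x * P x z) := by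
    intro j
    rcases lt_or_eq_of_le (Finset.sum_nonneg fun z _ => hGnn (j + 1) z) with h | h
    · exact h
    exfalso
    have hj₀0 : ∑ z, (if z ∈ A (j + 1) then (0 : ℝ) else ∑ x, ν x * P x z) = 0 := h.symm
    have hνP : (∑ x, ν x * P x x₀) = 0 := by
      have h1 := (Finset.sum_eq_zero_iff_of_nonneg fun z _ => hGnn (j + 1) z).mp hj₀0 x₀
        (Finset.mem_univ x₀)
      rwa [if_neg (hx₀A (j + 1))] at h1
    have hall : ∀ j' : ℕ, ∑ z, (if z ∈ A (j' + 1) then (0 : ℝ) else ∑ x, ν x * P x z) = 0 := by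
      intro j'
      have h1 := hR j' x₀
      rw [if_neg (hx₀A (j' + 1)), hνP] at h1
      exact (mul_eq_zero.mp h1).resolve_left (ne_of_gt hx₀)
    have hPz : ∀ j' : ℕ, ∀ z, z ∉ A (j' + 1) → P x₀ z = 0 := by
      intro j' z hz
      have h1 := (Finset.sum_eq_zero_iff_of_nonneg fun w _ => hGnn (j' + 1) w).mp (hall j') z
        (Finset.mem_univ z)
      rw [if_neg hz] at h1
      have h2 := (Finset.sum_eq_zero_iff_of_nonneg fun x _ =>
        mul_nonneg (hν0 x) (hP0 x z)).mp h1 x₀ (Finset.mem_univ x₀)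
      exact (mul_eq_zero.mp h2).resolve_left (ne_of_gt hx₀)
    have hPz' : ∀ k : ℕ, ∀ z, z ∉ A k → P x₀ z = 0 := by
      intro k z hz
      obtain ⟨j', hj'⟩ : ∃ j', k + γ = j' + 1 := ⟨k + γ - 1, by omega⟩
      apply hPz j'
      rw [← hj', hper]
      exact hz
    -- find a state w ≠ x₀ outside some A k
    obtain ⟨l, hl, m, hm, hlm⟩ := hA
    obtain ⟨k, w, hwA, hwx⟩ : ∃ k, ∃ w, w ∉ A k ∧ w ≠ x₀ := by
      by_contra hc
      push_neg at hc
      apply hlm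
      ext w
      constructor
      · intro hw
        by_contra hw2
        have := hc m w hw2
        rw [this] at hw
        exact hx₀A l hw
      · intro hw
        by_contra hw2
        have := hc l w hw2
        rw [this] at hw
        exact hx₀A m hw
    obtain ⟨i, hi⟩ := hirr k x₀ (hx₀A k) w hwA
    have hzero : ∀ i' : ℕ, ∀ y, mdist P (fun _ => A k) (dirac x₀) (i' + 1) y = 0 := by
      intro i'
      induction i' with
      | zero =>
        intro y
        simp only [mdist]
        split_ifs with h
        · rfl
        · refine Finset.sum_eq_zero fun x _ => ?_
          by_cases hx : x ∈ A k
          · simp [hx]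
          · by_cases hxx : x = x₀
            · rw [hxx, hPz' k y h, mul_zero]
            · simp [hx, dirac, hxx]
      | succ i' ih =>
        intro y
        rw [mdist_succ]
        split_ifs with h
        · rfl
        · refine Finset.sum_eq_zero fun x _ => ?_
          rw [ih x, zero_mul]
    cases i with
    | zero =>
      simp only [mdist, dirac] at hi
      rw [if_neg hwA, if_neg hwx] at hi
      exact lt_irrefl 0 hi
    | succ i =>
      rw [hzero i w] at hi
      exact lt_irrefl 0 hi
  -- core contradiction
  have core : ∀ a b : ℕ, ∀ z : E, z ∈ A a → z ∉ A b → False := by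
    intro a b z hza hzb
    obtain ⟨j, hj⟩ : ∃ j, b + γ = j + 1 := ⟨b + γ - 1, by omega⟩
    have hAb : A (j + 1) = A b := by rw [← hj, hper]
    have hθpos := hΘpos j
    have hRb : ∀ y, ν y * (∑ z', (if z' ∈ A (j + 1) then (0 : ℝ) else ∑ x, ν x * P x z'))
        = if y ∈ A b then (0 : ℝ) else ∑ x, ν x * P x y := by
      intro y
      rw [← hAb]
      exact hR j y
    set θ := ∑ z', (if z' ∈ A (j + 1) then (0 : ℝ) else ∑ x, ν x * P x z') with hθdef
    have hpow : ∀ i : ℕ, ∀ y, mdist P (fun _ => A b) ν i y = θ ^ i * ν y := by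
      intro i
      induction i with
      | zero =>
        intro y
        simp only [mdist, pow_zero, one_mul]
        split_ifs with h
        · exact (hsupp b y h).symm
        · rfl
      | succ i ih =>
        intro y
        simp only [mdist]
        by_cases h : y ∈ A b
        · rw [if_pos h, hsupp b y h, mul_zero]
        · rw [if_neg h]
          have h2 : ∑ x, mdist P (fun _ => A b) ν i x * P x y = θ ^ i * ∑ x, ν x * P x y := by
            rw [Finset.mul_sum]
            exact Finset.sum_congr rfl fun x _ => by rw [ih x]; ring
          rw [h2]
          have h3 := hRb y
          rw [if_neg h] at h3
          rw [← h3]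
          ring
    obtain ⟨i, hi⟩ := hirr b x₀ (hx₀A b) z hzb
    have hle := mdist_dirac_le hP0 (fun _ => A b) hν0 x₀ i z
    rw [hpow i z, hsupp a z hza, mul_zero] at hle
    nlinarith [mul_pos hx₀ hi]
  obtain ⟨l, hl, m, hm, hlm⟩ := hA
  obtain ⟨z, hz⟩ : ∃ z, (z ∈ A l ∧ z ∉ A m) ∨ (z ∈ A m ∧ z ∉ A l) := by
    by_contra hc
    push_neg at hc
    apply hlm
    ext z
    have h1 := hc z
    tauto
  rcases hz with ⟨h1, h2⟩ | ⟨h1, h2⟩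
  · exact core l m z h1 h2
  · exact core m l z h1 h2
end

section
/- Let (B_n)_{n≥0} be a γ-periodic sequence of subsets of E, F_0 = E ∖ B_0, and τ(B) = inf{m ≥ 0 : X_m ∈ B_m}. Define a transition kernel q on E by q(x, A) = P_x(X_γ ∈ A, τ(B) > γ) for x ∈ F_0 and A ⊆ F_0, q(x, B_0) = 1 − q(x, F_0) for x ∈ F_0, and let Z = (Z_n)_{n≥0} be a Markov chain on E with transition kernel q; set τ̃_{B_0} = inf{n ≥ 0 : Z_n ∈ B_0}. Then for every initial probability measure μ on E, every n ≥ 1, and all bounded functions φ_1, …, φ_n on E: E_μ[φ_1(X_γ)·…·φ_n(X_{nγ}) 1_{τ(B) > nγ}] = E_μ[φ_1(Z_1)·…·φ_n(Z_n) 1_{τ̃_{B_0} > n}]. Consequently, whenever P_μ(τ(B) > nγ) > 0, P_μ((X_γ, …, X_{nγ}) ∈ · | τ(B) > nγ) = P_μ((Z_1, …, Z_n) ∈ · | τ̃_{B_0} > n). -/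
variable {E : Type*}

/-- The index `(i+1)·γ` inside `Fin (n·γ + 1)`. -/
def blockIdx (γ n : ℕ) (i : Fin n) : Fin (n * γ + 1) :=
  ⟨(i.1 + 1) * γ, Nat.lt_succ_of_le (Nat.mul_le_mul_right γ i.isLt)⟩

/-- `E_μ[φ₁(X_γ) ⋯ φ_n(X_{nγ}) 1_{τ(B) > nγ}]` for the Markov chain `X` with transition
matrix `P` started from `μ`, where `τ(B) = inf {m | X_m ∈ B_m}`, written as a sum over all
paths of length `n·γ`. -/
noncomputable def blockExpX [Fintype E] [DecidableEq E] (P : E → E → ℝ) (B : ℕ → Finset E)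
    (μ : E → ℝ) (γ n : ℕ) (φ : Fin n → E → ℝ) : ℝ :=
  ∑ ω : Fin (n * γ + 1) → E,
    if ∀ k : Fin (n * γ + 1), ω k ∉ B (k : ℕ) then
      μ (ω 0) * (∏ i : Fin (n * γ), P (ω i.castSucc) (ω i.succ)) *
        ∏ i : Fin n, φ i (ω (blockIdx γ n i))
    else 0

/-- `E_μ[φ₁(Z_1) ⋯ φ_n(Z_n) 1_{τ̃_{B₀} > n}]` for the Markov chain `Z` with transition
kernel `q` started from `μ`, where `τ̃_{B₀} = inf {m | Z_m ∈ B₀}`. -/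
noncomputable def blockExpZ [Fintype E] [DecidableEq E] (q : E → E → ℝ) (B0 : Finset E)
    (μ : E → ℝ) (n : ℕ) (φ : Fin n → E → ℝ) : ℝ :=
  ∑ ω : Fin (n + 1) → E,
    if ∀ k : Fin (n + 1), ω k ∉ B0 then
      μ (ω 0) * (∏ i : Fin n, q (ω i.castSucc) (ω i.succ)) * ∏ i : Fin n, φ i (ω i.succ)
    else 0

/-!
Cutting a path of length `(n + 1)γ` at time `γ` factors its survival weight: by `γ`-periodicity
the remaining path faces the same moving boundary as a fresh one. Summing out the first block
therefore turns the `X`-expectation over `n + 1` blocks started from `ν` into the one over `n`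
blocks started from `ν' y = φ₁ y * ∑ x, ν x * K x y`, where `K x y = P_x(X_γ = y, τ(B) > γ)`.
The chain `Z` is the case `γ = 1` with constant boundary `B₀`; its one-step killed kernel is `q`
on `F₀ × F₀`, hence equals `K` (both vanish elsewhere), so both expectations obey the same
recursion from the same value `∑ x ∉ B₀, ν x` at `n = 0`.
-/

open Finset

section Paths

variable {R : Type*}

def pathFrom (a : ℕ) {b N : ℕ} (h : a + b = N) (ω : Fin (N + 1) → E) : Fin (b + 1) → E :=
  fun j => ω ⟨a + j, by omega⟩

theorem sum_pi_fin_succ [Fintype E] [AddCommMonoid R] (n : ℕ) (g : (Fin (n + 1) → E) → R) :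
    ∑ ω, g ω = ∑ x, ∑ t : Fin n → E, g (Fin.cons x t) := by
  rw [← (Fin.consEquiv fun _ => E).sum_comp, Fintype.sum_prod_type]
  rfl

theorem sum_mul_take_pathFrom [Fintype E] [NonUnitalNonAssocSemiring R] {a b N : ℕ}
    (h : a + b = N) (F : (Fin (a + 1) → E) → R) (G : (Fin (b + 1) → E) → R) :
    ∑ ω : Fin (N + 1) → E, F (Fin.take (a + 1) (by omega) ω) * G (pathFrom a h ω) =
      ∑ α, F α * ∑ t : Fin b → E, G (Fin.cons (α (Fin.last a)) t) := by
  subst h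
  rw [← ((Fin.appendEquiv (a + 1) b).trans
    ((finCongr (Nat.add_right_comm a 1 b)).arrowCongr (Equiv.refl E))).sum_comp,
    Fintype.sum_prod_type]
  refine sum_congr rfl fun α _ => ?_
  rw [mul_sum]
  refine sum_congr rfl fun t _ => ?_
  congr 2
  · funext k
    simp [Fin.take]
  · funext j
    cases j using Fin.cases with
    | zero => exact Fin.append_left α t (Fin.last a)
    | succ j =>
      rw [Fin.cons_succ, ← Fin.append_right α t j]
      show Fin.append α t _ = _
      exact congrArg _ (Fin.ext (by simp; omega))

theorem prod_steps_take_mul_pathFrom [CommMonoid R] {a b N : ℕ} (h : a + b = N)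
    (f : E → E → R) (ω : Fin (N + 1) → E) :
    ∏ i : Fin N, f (ω i.castSucc) (ω i.succ) =
      (∏ i : Fin a, f (Fin.take (a + 1) (by omega) ω i.castSucc)
        (Fin.take (a + 1) (by omega) ω i.succ)) *
      ∏ i : Fin b, f (pathFrom a h ω i.castSucc) (pathFrom a h ω i.succ) := by
  subst h
  rw [Fin.prod_univ_add]
  rfl

theorem forall_fin_iff_take_and_pathFrom {a b N : ℕ} (h : a + b = N) (p : ℕ → E → Prop)
    (ω : Fin (N + 1) → E) :
    (∀ k : Fin (N + 1), p k (ω k)) ↔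
      (∀ k : Fin (a + 1), p k (Fin.take (a + 1) (by omega) ω k)) ∧
        ∀ j : Fin (b + 1), p (a + j) (pathFrom a h ω j) := by
  refine ⟨fun hω => ⟨fun k => hω (Fin.castLE (by omega) k), fun j => hω ⟨a + j, by omega⟩⟩,
    fun ⟨hhead, htail⟩ k => ?_⟩
  by_cases hk : (k : ℕ) ≤ a
  · exact hhead ⟨k, by omega⟩
  · have hk' : a + (k - a) = k := by omega
    convert htail ⟨k - a, by omega⟩ using 2
    · exact hk'.symm
    · exact congrArg ω (Fin.ext hk'.symm)

theorem prod_blockIdx_succ [CommMonoid R] {γ n : ℕ} (h : γ + n * γ = (n + 1) * γ)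
    (φ : Fin (n + 1) → E → R) (ω : Fin ((n + 1) * γ + 1) → E) :
    ∏ i, φ i (ω (blockIdx γ (n + 1) i)) =
      φ 0 (pathFrom γ h ω 0) * ∏ i : Fin n, φ i.succ (pathFrom γ h ω (blockIdx γ n i)) := by
  rw [Fin.prod_univ_succ]
  congr 1
  · exact congrArg _ (congrArg ω (Fin.ext (by simp [blockIdx])))
  · refine prod_congr rfl fun i _ => congrArg _ (congrArg ω (Fin.ext ?_))
    simp [blockIdx]
    ring

end Paths

section Survival

variable [DecidableEq E] (P : E → E → ℝ) (B : ℕ → Finset E)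

def survivalWeight (m : ℕ) (ω : Fin (m + 1) → E) : ℝ :=
  if ∀ k : Fin (m + 1), ω k ∉ B k then ∏ i : Fin m, P (ω i.castSucc) (ω i.succ) else 0

theorem survivalWeight_split {a b N : ℕ} (h : a + b = N) (ω : Fin (N + 1) → E) :
    survivalWeight P B N ω =
      survivalWeight P B a (Fin.take (a + 1) (by omega) ω) *
        survivalWeight P (fun j => B (a + j)) b (pathFrom a h ω) := by
  unfold survivalWeight
  rw [ite_zero_mul_ite_zero, ← prod_steps_take_mul_pathFrom h]
  exact if_congr (forall_fin_iff_take_and_pathFrom h (fun k x => x ∉ B k) ω) rfl rfl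

variable [Fintype E]

def survivalKernel (γ : ℕ) (x y : E) : ℝ :=
  ∑ ω : Fin (γ + 1) → E,
    if ω 0 = x ∧ ω (Fin.last γ) = y ∧ ∀ k : Fin (γ + 1), ω k ∉ B (k : ℕ) then
      ∏ i : Fin γ, P (ω i.castSucc) (ω i.succ)
    else 0

theorem sum_mul_survivalKernel (γ : ℕ) (ν : E → ℝ) (y : E) :
    ∑ x, ν x * survivalKernel P B γ x y =
      ∑ α with α (Fin.last γ) = y, ν (α 0) * survivalWeight P B γ α := by
  simp_rw [survivalKernel, mul_sum]
  rw [sum_comm, sum_filter]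
  refine sum_congr rfl fun α _ => ?_
  simp_rw [ite_and, mul_ite, mul_zero, sum_ite_eq, mem_univ, if_true, survivalWeight, mul_ite,
    mul_zero]

theorem survivalKernel_eq_zero_of_left_mem {γ : ℕ} {x : E} (hx : x ∈ B 0) (y : E) :
    survivalKernel P B γ x y = 0 :=
  sum_eq_zero fun ω _ => if_neg fun ⟨h0, _, hω⟩ => hω 0 (by simpa [h0] using hx)

theorem survivalKernel_eq_zero_of_right_mem {γ : ℕ} (x : E) {y : E} (hy : y ∈ B γ) :
    survivalKernel P B γ x y = 0 :=
  sum_eq_zero fun ω _ => if_neg fun ⟨_, hlast, hω⟩ => hω (Fin.last γ) (by simpa [hlast] using hy)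

theorem survivalKernel_one {x y : E} (hx : x ∉ B 0) (hy : y ∉ B 1) :
    survivalKernel P B 1 x y = P x y := by
  rw [survivalKernel, Fintype.sum_eq_single ![x, y]]
  · rw [if_pos ⟨rfl, rfl, Fin.forall_fin_two.2 ⟨hx, hy⟩⟩]
    simp
  · intro ω hω
    refine if_neg fun ⟨h0, h1, _⟩ => hω ?_
    ext k
    fin_cases k <;> simp [h0, ← h1]

end Survival

section BlockExp

variable [Fintype E] [DecidableEq E]

theorem blockExpX_eq_sum (P : E → E → ℝ) (B : ℕ → Finset E) (ν : E → ℝ) (γ n : ℕ)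
    (φ : Fin n → E → ℝ) :
    blockExpX P B ν γ n φ =
      ∑ ω, ν (ω 0) * survivalWeight P B (n * γ) ω * ∏ i, φ i (ω (blockIdx γ n i)) := by
  simp only [blockExpX, survivalWeight, mul_ite, ite_mul, mul_zero, zero_mul]

theorem blockExpX_zero (P : E → E → ℝ) (B : ℕ → Finset E) (ν : E → ℝ) (γ : ℕ)
    (φ : Fin 0 → E → ℝ) :
    blockExpX P B ν γ 0 φ = ∑ x, if x ∉ B 0 then ν x else 0 := by
  rw [blockExpX_eq_sum]
  simp only [Fin.prod_univ_zero, mul_one]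
  rw [zero_mul]
  refine Fintype.sum_equiv (Equiv.funUnique (Fin 1) E) _ _ fun ω => ?_
  simp [survivalWeight, Fin.forall_fin_one]

theorem blockExpX_succ (P : E → E → ℝ) {B : ℕ → Finset E} {γ : ℕ}
    (hper : ∀ m, B (m + γ) = B m) (ν : E → ℝ) (n : ℕ) (φ : Fin (n + 1) → E → ℝ) :
    blockExpX P B ν γ (n + 1) φ =
      blockExpX P B (fun y => φ 0 y * ∑ x, ν x * survivalKernel P B γ x y) γ n
        (fun i => φ i.succ) := by
  have h : γ + n * γ = (n + 1) * γ := by ring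
  have hshift : (fun j => B (γ + j)) = B := funext fun j => by rw [add_comm, hper]
  set G : (Fin (n * γ + 1) → E) → ℝ := fun β =>
    φ 0 (β 0) * survivalWeight P B (n * γ) β * ∏ i, φ i.succ (β (blockIdx γ n i))
  calc blockExpX P B ν γ (n + 1) φ
      = ∑ ω : Fin ((n + 1) * γ + 1) → E,
          ν (ω 0) * survivalWeight P B γ (Fin.take (γ + 1) (by omega) ω) *
            G (pathFrom γ h ω) := by
        rw [blockExpX_eq_sum]
        refine sum_congr rfl fun ω _ => ?_
        rw [survivalWeight_split P B h, hshift, prod_blockIdx_succ h]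
        simp only [G]
        ring
    _ = ∑ α : Fin (γ + 1) → E, ν (α 0) * survivalWeight P B γ α *
          ∑ t : Fin (n * γ) → E, G (Fin.cons (α (Fin.last γ)) t) :=
        sum_mul_take_pathFrom h (fun α => ν (α 0) * survivalWeight P B γ α) G
    _ = ∑ y, (∑ x, ν x * survivalKernel P B γ x y) * ∑ t : Fin (n * γ) → E, G (Fin.cons y t) := by
        rw [← sum_fiberwise univ (fun α : Fin (γ + 1) → E => α (Fin.last γ))]
        refine sum_congr rfl fun y _ => ?_
        rw [sum_mul_survivalKernel, sum_mul]
        exact sum_congr rfl fun α hα => by rw [(mem_filter.1 hα).2]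
    _ = _ := by
        rw [blockExpX_eq_sum, sum_pi_fin_succ]
        refine sum_congr rfl fun y _ => ?_
        rw [mul_sum]
        refine sum_congr rfl fun t _ => ?_
        simp only [G, Fin.cons_zero]
        ring

theorem blockExpX_eq_of_survivalKernel_eq {P P' : E → E → ℝ} {B B' : ℕ → Finset E} {γ γ' : ℕ}
    (hper : ∀ m, B (m + γ) = B m) (hper' : ∀ m, B' (m + γ') = B' m) (h0 : B 0 = B' 0)
    (hK : survivalKernel P B γ = survivalKernel P' B' γ') (n : ℕ) :
    ∀ ν φ, blockExpX P B ν γ n φ = blockExpX P' B' ν γ' n φ := by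
  induction n with
  | zero => intro ν φ; rw [blockExpX_zero, blockExpX_zero, h0]
  | succ n ih => intro ν φ; rw [blockExpX_succ P hper, blockExpX_succ P' hper', hK, ih]

theorem blockExpZ_eq_blockExpX_one (q : E → E → ℝ) (B0 : Finset E) (μ : E → ℝ) (n : ℕ)
    (φ : Fin n → E → ℝ) : blockExpZ q B0 μ n φ = blockExpX q (fun _ => B0) μ 1 n φ := by
  have h : n * 1 = n := mul_one n
  unfold blockExpZ blockExpX
  refine Fintype.sum_equiv ((finCongr (by omega)).arrowCongr (Equiv.refl E)) _ _ fun ω => ?_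
  have hidx (i : Fin n) : Fin.cast (by omega) (blockIdx 1 n i) = i.succ :=
    Fin.ext (by simp [blockIdx])
  simp only [Equiv.arrowCongr_apply, Equiv.coe_refl, finCongr_symm, finCongr_apply,
    Function.comp_apply, id_eq, hidx, Fin.cast_zero]
  refine if_congr ⟨fun hω k => hω _, fun hω k => by simpa using hω (Fin.cast (by omega) k)⟩
    ?_ rfl
  congr 2
  exact (Fintype.prod_equiv (finCongr h) _ _ fun _ => rfl).symm

end BlockExp

theorem moving_to_fixed_boundary_reduction_general [Fintype E] [DecidableEq E]
    (P : E → E → ℝ)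
    (γ : ℕ) (B : ℕ → Finset E) (hper : ∀ n : ℕ, B (n + γ) = B n)
    (q : E → E → ℝ)
    (hq : ∀ x ∉ B 0, ∀ y ∉ B 0,
      q x y = ∑ ω : Fin (γ + 1) → E,
        if ω 0 = x ∧ ω (Fin.last γ) = y ∧ ∀ k : Fin (γ + 1), ω k ∉ B (k : ℕ) then
          ∏ i : Fin γ, P (ω i.castSucc) (ω i.succ)
        else 0)
    (μ : E → ℝ) :
    ∀ n : ℕ, 1 ≤ n →
      (∀ φ : Fin n → E → ℝ, blockExpX P B μ γ n φ = blockExpZ q (B 0) μ n φ) ∧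
      (0 < blockExpX P B μ γ n (fun _ _ => 1) →
        ∀ y : Fin n → E,
          blockExpX P B μ γ n (fun i z => if z = y i then 1 else 0) /
              blockExpX P B μ γ n (fun _ _ => 1) =
            blockExpZ q (B 0) μ n (fun i z => if z = y i then 1 else 0) /
              blockExpZ q (B 0) μ n (fun _ _ => 1)) := by
  have hK : survivalKernel P B γ = survivalKernel q (fun _ => B 0) 1 := by
    ext x y
    by_cases hx : x ∈ B 0
    · rw [survivalKernel_eq_zero_of_left_mem P B hx,
        survivalKernel_eq_zero_of_left_mem q (fun _ => B 0) hx]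
    by_cases hy : y ∈ B 0
    · have hyγ : y ∈ B γ := by rwa [← zero_add γ, hper]
      rw [survivalKernel_eq_zero_of_right_mem P B x hyγ,
        survivalKernel_eq_zero_of_right_mem q (fun _ => B 0) x hy]
    exact ((survivalKernel_one q (fun _ => B 0) hx hy).trans (hq x hx y hy)).symm
  intro n _
  have key (φ : Fin n → E → ℝ) : blockExpX P B μ γ n φ = blockExpZ q (B 0) μ n φ := by
    rw [blockExpZ_eq_blockExpX_one,
      blockExpX_eq_of_survivalKernel_eq hper (B' := fun _ => B 0) (fun _ => rfl) rfl hK]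
  exact ⟨key, fun _ y => by rw [key, key]⟩

/-- Reduction of a `γ`-periodically moving boundary to a fixed one: if `q` is a transition
kernel which on `F₀ = E ∖ B₀` coincides with `q(x, y) = P_x(X_γ = y, τ(B) > γ)` (and sends the
remaining mass to `B₀`), and `Z` is a Markov chain with kernel `q`, then for all bounded
`φ₁, …, φ_n`, `E_μ[φ₁(X_γ)⋯φ_n(X_{nγ}) 1_{τ(B) > nγ}] = E_μ[φ₁(Z_1)⋯φ_n(Z_n) 1_{τ̃_{B₀} > n}]`;
consequently the conditional laws of `(X_γ, …, X_{nγ})` given `τ(B) > nγ` and of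
`(Z_1, …, Z_n)` given `τ̃_{B₀} > n` coincide whenever `P_μ(τ(B) > nγ) > 0`. -/
theorem moving_to_fixed_boundary_reduction [Fintype E] [DecidableEq E]
    (P : E → E → ℝ) (hPnn : ∀ x y, 0 ≤ P x y) (hPsum : ∀ x, ∑ y, P x y = 1)
    (γ : ℕ) (hγ : 1 ≤ γ) (B : ℕ → Finset E) (hper : ∀ n : ℕ, B (n + γ) = B n)
    (q : E → E → ℝ) (hqnn : ∀ x y, 0 ≤ q x y) (hqsum : ∀ x, ∑ y, q x y = 1)
    (hq : ∀ x ∉ B 0, ∀ y ∉ B 0,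
      q x y = ∑ ω : Fin (γ + 1) → E,
        if ω 0 = x ∧ ω (Fin.last γ) = y ∧ ∀ k : Fin (γ + 1), ω k ∉ B (k : ℕ) then
          ∏ i : Fin γ, P (ω i.castSucc) (ω i.succ)
        else 0)
    (μ : E → ℝ) (hμnn : ∀ x, 0 ≤ μ x) (hμsum : ∑ x, μ x = 1) :
    ∀ n : ℕ, 1 ≤ n →
      (∀ φ : Fin n → E → ℝ, blockExpX P B μ γ n φ = blockExpZ q (B 0) μ n φ) ∧
      (0 < blockExpX P B μ γ n (fun _ _ => 1) →
        ∀ y : Fin n → E,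
          blockExpX P B μ γ n (fun i z => if z = y i then 1 else 0) /
              blockExpX P B μ γ n (fun _ _ => 1) =
            blockExpZ q (B 0) μ n (fun i z => if z = y i then 1 else 0) /
              blockExpZ q (B 0) μ n (fun _ _ => 1)) :=
  moving_to_fixed_boundary_reduction_general P γ B hper q hq μ
end

section
/- Assume (A_n)_{n≥0} is γ-periodic and fix x ∈ E_0. Let Y_n = (X_n, n mod γ) on E × ℤ/γℤ, killed on ∂ = {(z, k̄) : z ∈ A_k}, and let D be the communicating class of (x, 0̄); assume the restriction of Y to D is irreducible with spectral radius ρ_x > 0, strictly positive right Perron eigenvector ξ_x on D, and that every state reachable from (x, 0̄) by Y before hitting ∂ lies in D. Then for every n ≥ 1 and all y_1, …, y_n ∈ E, the limit ℚ_x(X_1 = y_1, …, X_n = y_n) := lim_{m→∞} P_x(X_1 = y_1, …, X_n = y_n | τ > m) exists and equals E_x[1_{X_1=y_1,…,X_n=y_n} 1_{τ>n} ξ_x(X_n, n̄)] / (ρ_x^n ξ_x(x, 0̄)); under ℚ_x, (X_n) is a time-inhomogeneous Markov chain whose transition probabilities are, for n ≥ 1, y ∈ E_{n−1}, z ∈ E_n: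 ℚ_x(X_n = z | X_{n−1} = y) = ξ_x(z, n̄) · P_y(X_1 = z) / (ρ_x · ξ_x(y, (n−1)‾)). -/
/-!
Let `Q` be the kernel of the space-time chain `Y` killed on `∂` and `z₀ = (x, 0̄)`. Since `ξ` is a
positive `ρ`-eigenvector on the states reachable from `z₀`, the Doob transform
`Qᵐ(z, w) ξ(w) / (ρᵐ ξ(z))` is a Markov kernel there, and `P_z(τ > m) = ρᵐ ξ(z) gₘ(z)` with
`gₘ(z)` its average of `1 / ξ`, bounded above and below. The class may be periodic, but two
states reached from `z₀` at the same time have, via loops through `z₀`, a common successor after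
the same number of steps; a uniform Doeblin bound and Dobrushin's contraction then give
`gₘ(u) - gₘ(v) → 0` for such states. By the Markov property at time `n`,
`P_x(X_{≤n} = q, τ > m) = P_x(X_{≤n} = q, τ > n) ρ^{m-n} ξ(zₙ) g_{m-n}(zₙ)` with `zₙ = (q n, n̄)`,
while `gₘ(z₀)` is a Doob average of `g_{m-n}` over the states reached at time `n`; hence
`g_{m-n}(zₙ) / gₘ(z₀) → 1`.
-/

open Filter

variable {E : Type*}

/-- `n`-step sub-transition probabilities of a sub-Markov kernel `Q` on a finite set `S`. -/
noncomputable def kpow {S : Type*} [Fintype S] [DecidableEq S] (Q : S → S → ℝ) :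
    ℕ → S → S → ℝ
  | 0 => fun a b => if a = b then 1 else 0
  | n + 1 => fun a b => ∑ c, kpow Q n a c * Q c b

/-- The sub-transition matrix of the space-time chain `Y_n = (X_n, n mod γ)` on
`E × ℤ/γℤ`, killed on `∂ = {(z, k̄) : z ∈ A k}`. -/
def QY [Fintype E] [DecidableEq E] (P : E → E → ℝ) (A : ℕ → Finset E) (γ : ℕ) :
    (E × ZMod γ) → (E × ZMod γ) → ℝ :=
  fun a b =>
    if a.1 ∉ A a.2.val ∧ b.1 ∉ A b.2.val ∧ b.2 = a.2 + 1 then P a.1 b.1 else 0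

/-- `cylProb P A q n m = P_{q 0}(X_1 = q 1, …, X_n = q n, τ > m)` (for `m ≥ n`), where
`τ = inf {k | X_k ∈ A k}`, written as a sum over all paths of length `m`. -/
noncomputable def cylProb [Fintype E] [DecidableEq E] (P : E → E → ℝ) (A : ℕ → Finset E)
    (q : ℕ → E) (n m : ℕ) : ℝ :=
  ∑ ω : Fin (m + 1) → E,
    if (∀ i : Fin (m + 1), (i : ℕ) ≤ n → ω i = q (i : ℕ)) ∧
        (∀ i : Fin (m + 1), ω i ∉ A (i : ℕ)) then
      ∏ i : Fin m, P (ω i.castSucc) (ω i.succ)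
    else 0

/-- The value `E_x[1_{X_1 = q 1, …, X_n = q n} 1_{τ > n} ξ(X_n, n̄)] / (ρ^n ξ(x, 0̄))`
of the `Q`-process on the cylinder determined by `q` up to time `n` (here `x = q 0`). -/
noncomputable def qProcessCyl [DecidableEq E] (P : E → E → ℝ) (A : ℕ → Finset E) (γ : ℕ)
    (ρ : ℝ) (ξ : E × ZMod γ → ℝ) (q : ℕ → E) (n : ℕ) : ℝ :=
  (if ∀ i ≤ n, q i ∉ A i then ∏ i ∈ Finset.range n, P (q i) (q (i + 1)) else 0) *
      ξ (q n, (n : ZMod γ)) / (ρ ^ n * ξ (q 0, (0 : ZMod γ)))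

open Topology

namespace kpow

variable {S : Type*} [Fintype S] [DecidableEq S] {Q : S → S → ℝ}

theorem zero_apply (a b : S) : kpow Q 0 a b = if a = b then 1 else 0 := rfl

theorem succ_apply (m : ℕ) (a b : S) : kpow Q (m + 1) a b = ∑ c, kpow Q m a c * Q c b := rfl

theorem add_apply (s t : ℕ) (a b : S) :
    kpow Q (s + t) a b = ∑ c, kpow Q s a c * kpow Q t c b := by
  induction t generalizing b with
  | zero => simp [zero_apply]
  | succ t ih =>
    simp only [← add_assoc, succ_apply, ih, Finset.sum_mul, Finset.mul_sum, mul_assoc]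
    exact Finset.sum_comm

theorem one_apply (a b : S) : kpow Q 1 a b = Q a b := by
  simp [succ_apply, zero_apply]

theorem nonneg (hQ : ∀ a b, 0 ≤ Q a b) (m : ℕ) (a b : S) : 0 ≤ kpow Q m a b := by
  induction m generalizing b with
  | zero => rw [zero_apply]; positivity
  | succ m ih => exact Finset.sum_nonneg fun c _ => mul_nonneg (ih c) (hQ c b)

theorem pos_add (hQ : ∀ a b, 0 ≤ Q a b) {s t : ℕ} {a b c : S}
    (hab : 0 < kpow Q s a b) (hbc : 0 < kpow Q t b c) : 0 < kpow Q (s + t) a c := by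
  rw [add_apply]
  exact (mul_pos hab hbc).trans_le <| Finset.single_le_sum
    (fun v _ => mul_nonneg (nonneg hQ s a v) (nonneg hQ t v c)) (Finset.mem_univ b)

theorem pos_succ (hQ : ∀ a b, 0 ≤ Q a b) {m : ℕ} {a b c : S}
    (hab : 0 < kpow Q m a b) (hbc : 0 < Q b c) : 0 < kpow Q (m + 1) a c :=
  pos_add hQ hab (by rwa [one_apply])

end kpow

/-- Dobrushin's contraction: after removing their common part `min μ ν`, both vectors have mass
`1 - ∑ min μ ν`, and they integrate `f` to at most `(1 - ∑ min μ ν) * max_T f` and at least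
`(1 - ∑ min μ ν) * min_T f` respectively. -/
theorem sum_mul_sub_sum_mul_le_of_overlap {ι : Type*} [Fintype ι] {μ ν f : ι → ℝ}
    {T : Finset ι} {c ε : ℝ} (hμ : ∀ i, 0 ≤ μ i) (hν : ∀ i, 0 ≤ ν i) (hμ1 : ∑ i, μ i = 1)
    (hν1 : ∑ i, ν i = 1) (hμT : ∀ i, μ i ≠ 0 → i ∈ T) (hνT : ∀ i, ν i ≠ 0 → i ∈ T)
    (hf : ∀ i ∈ T, ∀ j ∈ T, f i - f j ≤ c) (hε : ε ≤ ∑ i, min (μ i) (ν i)) :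
    ∑ i, μ i * f i - ∑ i, ν i * f i ≤ (1 - ε) * c := by
  obtain ⟨i, -, hi⟩ := Finset.exists_ne_zero_of_sum_ne_zero (hμ1.trans_ne one_ne_zero)
  have hT : T.Nonempty := ⟨i, hμT i hi⟩
  obtain ⟨i₁, hi₁, hmax⟩ := T.exists_max_image f hT
  obtain ⟨i₀, hi₀, hmin⟩ := T.exists_min_image f hT
  set s := ∑ i, min (μ i) (ν i)
  have hs : s ≤ 1 := hμ1 ▸ Finset.sum_le_sum fun i _ => min_le_left _ _
  have hμf : ∑ i, (μ i - min (μ i) (ν i)) * f i ≤ (1 - s) * f i₁ := by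
    calc ∑ i, (μ i - min (μ i) (ν i)) * f i ≤ ∑ i, (μ i - min (μ i) (ν i)) * f i₁ := by
          refine Finset.sum_le_sum fun i _ => ?_
          rcases (sub_nonneg.2 (min_le_left (μ i) (ν i))).eq_or_lt with h | h
          · rw [← h, zero_mul, zero_mul]
          · have : μ i ≠ 0 := fun h0 => by
              rw [h0, min_eq_left (hν i), sub_self] at h; exact lt_irrefl 0 h
            exact mul_le_mul_of_nonneg_left (hmax i (hμT i this)) h.le
      _ = (1 - s) * f i₁ := by rw [← Finset.sum_mul, Finset.sum_sub_distrib, hμ1]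
  have hνf : (1 - s) * f i₀ ≤ ∑ i, (ν i - min (μ i) (ν i)) * f i := by
    calc (1 - s) * f i₀ = ∑ i, (ν i - min (μ i) (ν i)) * f i₀ := by
          rw [← Finset.sum_mul, Finset.sum_sub_distrib, hν1]
      _ ≤ ∑ i, (ν i - min (μ i) (ν i)) * f i := by
          refine Finset.sum_le_sum fun i _ => ?_
          rcases (sub_nonneg.2 (min_le_right (μ i) (ν i))).eq_or_lt with h | h
          · rw [← h, zero_mul, zero_mul]
          · have : ν i ≠ 0 := fun h0 => by
              rw [h0, min_eq_right (hμ i), sub_self] at h; exact lt_irrefl 0 h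
            exact mul_le_mul_of_nonneg_left (hmin i (hνT i this)) h.le
  have hdiff : ∑ i, μ i * f i - ∑ i, ν i * f i =
      ∑ i, (μ i - min (μ i) (ν i)) * f i - ∑ i, (ν i - min (μ i) (ν i)) * f i := by
    rw [← Finset.sum_sub_distrib, ← Finset.sum_sub_distrib]
    exact Finset.sum_congr rfl fun i _ => by ring
  have hc0 : 0 ≤ c := (sub_self (f i₁)).symm.trans_le (hf i₁ hi₁ i₁ hi₁)
  rw [hdiff]
  calc _ ≤ (1 - s) * f i₁ - (1 - s) * f i₀ := sub_le_sub hμf hνf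
    _ = (1 - s) * (f i₁ - f i₀) := by ring
    _ ≤ (1 - s) * c := mul_le_mul_of_nonneg_left (hf i₁ hi₁ i₀ hi₀) (sub_nonneg.2 hs)
    _ ≤ (1 - ε) * c := mul_le_mul_of_nonneg_right (by linarith) hc0

section Perron

variable {S : Type*} [Fintype S] [DecidableEq S]

noncomputable def survival (Q : S → S → ℝ) (m : ℕ) (z : S) : ℝ := ∑ w, kpow Q m z w

theorem survival_add (Q : S → S → ℝ) (a b : ℕ) (z : S) :
    survival Q (a + b) z = ∑ v, kpow Q a z v * survival Q b v := by
  simp only [survival, kpow.add_apply, Finset.mul_sum]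
  exact Finset.sum_comm

noncomputable def doobKernel (Q : S → S → ℝ) (ρ : ℝ) (ξ : S → ℝ) (m : ℕ) (z w : S) : ℝ :=
  kpow Q m z w * ξ w / (ρ ^ m * ξ z)

noncomputable def scaledSurvival (Q : S → S → ℝ) (ρ : ℝ) (ξ : S → ℝ) (m : ℕ) (z : S) : ℝ :=
  survival Q m z / (ρ ^ m * ξ z)

structure IsPerronVector (Q : S → S → ℝ) (z₀ : S) (ρ : ℝ) (ξ : S → ℝ) : Prop where
  nonneg : ∀ a b, 0 ≤ Q a b
  returns : ∀ n z, 0 < kpow Q n z₀ z → ∃ m, 0 < kpow Q m z z₀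
  pos : 0 < ρ
  eigvec_pos : ∀ n z, 0 < kpow Q n z₀ z → 0 < ξ z
  eigvec : ∀ n z, 0 < kpow Q n z₀ z → ∑ w, Q z w * ξ w = ρ * ξ z

namespace IsPerronVector

theorem of_class {Q : S → S → ℝ} {z₀ : S} {D : Finset S} {ρ : ℝ} {ξ : S → ℝ}
    (hQ : ∀ a b, 0 ≤ Q a b)
    (hreturn : ∀ z ∈ D, ∃ m, 0 < kpow Q m z z₀)
    (hreach : ∀ z, (∃ n, 0 < kpow Q n z₀ z) → z ∈ D) (hρ : 0 < ρ)
    (hξpos : ∀ z ∈ D, 0 < ξ z) (hξeig : ∀ z ∈ D, ∑ w ∈ D, Q z w * ξ w = ρ * ξ z) :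
    IsPerronVector Q z₀ ρ ξ where
  nonneg := hQ
  returns n z hz := hreturn z (hreach z ⟨n, hz⟩)
  pos := hρ
  eigvec_pos n z hz := hξpos z (hreach z ⟨n, hz⟩)
  eigvec n z hz := by
    rw [← hξeig z (hreach z ⟨n, hz⟩)]
    refine (Finset.sum_subset (Finset.subset_univ D) fun w _ hw => ?_).symm
    by_contra h
    exact hw (hreach w ⟨n + 1, kpow.pos_succ hQ hz ((hQ z w).lt_of_ne' (left_ne_zero_of_mul h))⟩)

variable {Q : S → S → ℝ} {z₀ : S} {ρ : ℝ} {ξ : S → ℝ} (H : IsPerronVector Q z₀ ρ ξ)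
include H

theorem reach_trans {n m : ℕ} {z w : S} (hz : 0 < kpow Q n z₀ z) (hw : kpow Q m z w ≠ 0) :
    0 < kpow Q (n + m) z₀ w :=
  kpow.pos_add H.nonneg hz ((kpow.nonneg H.nonneg m z w).lt_of_ne' hw)

theorem sum_kpow_mul_eigvec {n : ℕ} {z : S} (hz : 0 < kpow Q n z₀ z) (m : ℕ) :
    ∑ w, kpow Q m z w * ξ w = ρ ^ m * ξ z := by
  induction m with
  | zero => simp [kpow.zero_apply]
  | succ m ih =>
    have step : ∀ c, kpow Q m z c * ∑ w, Q c w * ξ w = ρ * (kpow Q m z c * ξ c) := fun c => by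
      by_cases hc : kpow Q m z c = 0
      · simp [hc]
      · rw [H.eigvec _ c (H.reach_trans hz hc)]; ring
    calc ∑ w, kpow Q (m + 1) z w * ξ w = ∑ c, kpow Q m z c * ∑ w, Q c w * ξ w := by
          simp only [kpow.succ_apply, Finset.sum_mul, Finset.mul_sum, mul_assoc]
          exact Finset.sum_comm
      _ = ρ * ∑ c, kpow Q m z c * ξ c := by
          rw [Finset.mul_sum]; exact Finset.sum_congr rfl fun c _ => step c
      _ = ρ ^ (m + 1) * ξ z := by rw [ih, pow_succ]; ring

theorem exists_pos_succ {n : ℕ} {z : S} (hz : 0 < kpow Q n z₀ z) : ∃ w, 0 < Q z w := by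
  have hsum : ∑ w, Q z w * ξ w ≠ 0 := by
    rw [H.eigvec n z hz]; exact (mul_pos H.pos (H.eigvec_pos n z hz)).ne'
  obtain ⟨w, -, hw⟩ := Finset.exists_ne_zero_of_sum_ne_zero hsum
  exact ⟨w, (H.nonneg z w).lt_of_ne' (left_ne_zero_of_mul hw)⟩

theorem exists_kpow_pos {n : ℕ} {z : S} (hz : 0 < kpow Q n z₀ z) (j : ℕ) :
    ∃ w, 0 < kpow Q j z w := by
  induction j with
  | zero => exact ⟨z, by simp [kpow.zero_apply]⟩
  | succ j ih =>
    obtain ⟨w, hw⟩ := ih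
    obtain ⟨w', hw'⟩ := H.exists_pos_succ (kpow.pos_add H.nonneg hz hw)
    exact ⟨w', kpow.pos_succ H.nonneg hw hw'⟩

/-- From `u` go around `u → z₀ → v → z₀ → u`, from `v` along `v → z₀ → u → z₀ → u`; both have
length `a + s + b + s`, and any path out of `u` extends them. -/
theorem eventually_common_target {s : ℕ} {u v : S} (hu : 0 < kpow Q s z₀ u)
    (hv : 0 < kpow Q s z₀ v) :
    ∀ᶠ k in atTop, ∃ w, 0 < kpow Q k u w ∧ 0 < kpow Q k v w := by
  obtain ⟨a, ha⟩ := H.returns s u hu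
  obtain ⟨b, hb⟩ := H.returns s v hv
  have hQ := H.nonneg
  have hu' : 0 < kpow Q (a + (s + (b + s))) u u :=
    kpow.pos_add hQ ha (kpow.pos_add hQ hv (kpow.pos_add hQ hb hu))
  have hv' : 0 < kpow Q (a + (s + (b + s))) v u := by
    rw [show a + (s + (b + s)) = b + (s + (a + s)) by ring]
    exact kpow.pos_add hQ hb (kpow.pos_add hQ hu (kpow.pos_add hQ ha hu))
  filter_upwards [eventually_ge_atTop (a + (s + (b + s)))] with k hk
  obtain ⟨w, hw⟩ := H.exists_kpow_pos hu (k - (a + (s + (b + s))))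
  refine ⟨w, ?_, ?_⟩ <;> rw [← Nat.add_sub_cancel' hk]
  exacts [kpow.pos_add hQ hu' hw, kpow.pos_add hQ hv' hw]

theorem doobKernel_nonneg {n : ℕ} {z : S} (hz : 0 < kpow Q n z₀ z) (m : ℕ) (w : S) :
    0 ≤ doobKernel Q ρ ξ m z w := by
  unfold doobKernel
  by_cases hw : kpow Q m z w = 0
  · simp [hw]
  · have := H.pos; have := H.eigvec_pos _ _ hz; have := H.eigvec_pos _ _ (H.reach_trans hz hw)
    have := kpow.nonneg H.nonneg m z w
    positivity

theorem doobKernel_pos {n m : ℕ} {z w : S} (hz : 0 < kpow Q n z₀ z) (hw : 0 < kpow Q m z w) :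
    0 < doobKernel Q ρ ξ m z w := by
  have := H.pos; have := H.eigvec_pos _ _ hz; have := H.eigvec_pos _ _ (H.reach_trans hz hw.ne')
  unfold doobKernel
  positivity

theorem sum_doobKernel {n : ℕ} {z : S} (hz : 0 < kpow Q n z₀ z) (m : ℕ) :
    ∑ w, doobKernel Q ρ ξ m z w = 1 := by
  have := H.pos; have := H.eigvec_pos _ _ hz
  unfold doobKernel
  rw [← Finset.sum_div, H.sum_kpow_mul_eigvec hz, div_self (by positivity)]

theorem scaledSurvival_add {n : ℕ} {z : S} (hz : 0 < kpow Q n z₀ z) (a b : ℕ) :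
    scaledSurvival Q ρ ξ (a + b) z = ∑ v, doobKernel Q ρ ξ a z v * scaledSurvival Q ρ ξ b v := by
  have := H.pos; have := H.eigvec_pos _ _ hz
  rw [scaledSurvival, survival_add, Finset.sum_div]
  refine Finset.sum_congr rfl fun v _ => ?_
  by_cases hv : kpow Q a z v = 0
  · simp [doobKernel, hv]
  · have := H.eigvec_pos _ _ (H.reach_trans hz hv)
    simp only [doobKernel, scaledSurvival]
    field_simp
    ring

theorem scaledSurvival_nonneg {n : ℕ} {z : S} (hz : 0 < kpow Q n z₀ z) (m : ℕ) :
    0 ≤ scaledSurvival Q ρ ξ m z := by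
  have := H.pos; have := H.eigvec_pos _ _ hz
  have : 0 ≤ survival Q m z := Finset.sum_nonneg fun w _ => kpow.nonneg H.nonneg m z w
  unfold scaledSurvival
  positivity

/-- `scaledSurvival m z` is a `doobKernel m z`-average of `1 / ξ`, so it lies between the
reciprocals of the extreme values of `ξ` on the states reachable from `z₀`. -/
theorem exists_scaledSurvival_mem_Icc :
    ∃ c C : ℝ, 0 < c ∧ ∀ n z, 0 < kpow Q n z₀ z → ∀ m, scaledSurvival Q ρ ξ m z ∈ Set.Icc c C := by
  set R : Set S := {w | ∃ n, 0 < kpow Q n z₀ w}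
  have hR : R.Nonempty := ⟨z₀, 0, by simp [kpow.zero_apply]⟩
  obtain ⟨w₁, ⟨n₁, hw₁⟩, hmin⟩ := R.exists_min_image ξ R.toFinite hR
  obtain ⟨w₂, ⟨n₂, hw₂⟩, hmax⟩ := R.exists_max_image ξ R.toFinite hR
  have hξ₁ := H.eigvec_pos _ _ hw₁
  have hξ₂ := H.eigvec_pos _ _ hw₂
  refine ⟨(ξ w₂)⁻¹, (ξ w₁)⁻¹, inv_pos.2 hξ₂, fun n z hz m => ?_⟩
  have := H.pos; have := H.eigvec_pos _ _ hz
  have hD : 0 < ρ ^ m * ξ z := by positivity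
  have hbound : ∀ w, ξ w₁ * kpow Q m z w ≤ kpow Q m z w * ξ w ∧
      kpow Q m z w * ξ w ≤ ξ w₂ * kpow Q m z w := fun w => by
    by_cases hw : kpow Q m z w = 0
    · simp [hw]
    · have hwR : w ∈ R := ⟨_, H.reach_trans hz hw⟩
      have := kpow.nonneg H.nonneg m z w
      constructor <;> nlinarith [hmin w hwR, hmax w hwR]
  have hlow := Finset.sum_le_sum fun w (_ : w ∈ Finset.univ) => (hbound w).1
  have hup := Finset.sum_le_sum fun w (_ : w ∈ Finset.univ) => (hbound w).2
  rw [← Finset.mul_sum, H.sum_kpow_mul_eigvec hz] at hlow hup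
  constructor
  · rw [scaledSurvival, le_div_iff₀ hD, inv_mul_le_iff₀ hξ₂]; exact hup
  · rw [scaledSurvival, div_le_iff₀ hD, ← div_eq_inv_mul, le_div_iff₀ hξ₁, mul_comm]; exact hlow

theorem reach_of_doobKernel_ne_zero {n m : ℕ} {z w : S} (hz : 0 < kpow Q n z₀ z)
    (hw : doobKernel Q ρ ξ m z w ≠ 0) : 0 < kpow Q (n + m) z₀ w :=
  H.reach_trans hz fun h => hw (by simp [doobKernel, h])

theorem exists_uniform_overlap : ∃ (K : ℕ) (ε : ℝ), 0 < K ∧ 0 < ε ∧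
    ∀ s u v, 0 < kpow Q s z₀ u → 0 < kpow Q s z₀ v →
      ε ≤ ∑ w, min (doobKernel Q ρ ξ K u w) (doobKernel Q ρ ξ K v w) := by
  set pairs : Set (S × S) := {p | ∃ s, 0 < kpow Q s z₀ p.1 ∧ 0 < kpow Q s z₀ p.2}
  have hev : ∀ᶠ k in atTop, ∀ p ∈ pairs, ∃ w, 0 < kpow Q k p.1 w ∧ 0 < kpow Q k p.2 w :=
    pairs.toFinite.eventually_all.2 fun p ⟨_, hu, hv⟩ => H.eventually_common_target hu hv
  obtain ⟨K, hK, hKpos⟩ := (hev.and (eventually_gt_atTop 0)).exists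
  set δ : S × S → ℝ := fun p => ∑ w, min (doobKernel Q ρ ξ K p.1 w) (doobKernel Q ρ ξ K p.2 w)
  have hδ : ∀ p ∈ pairs, 0 < δ p := by
    rintro p ⟨s, hu, hv⟩
    obtain ⟨w, huw, hvw⟩ := hK p ⟨s, hu, hv⟩
    exact (lt_min (H.doobKernel_pos hu huw) (H.doobKernel_pos hv hvw)).trans_le <|
      Finset.single_le_sum (f := fun w => min (doobKernel Q ρ ξ K p.1 w) (doobKernel Q ρ ξ K p.2 w))
        (fun w _ => le_min (H.doobKernel_nonneg hu K w) (H.doobKernel_nonneg hv K w))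
        (Finset.mem_univ w)
  have h₀ : 0 < kpow Q 0 z₀ z₀ := by simp [kpow.zero_apply]
  obtain ⟨p₀, hp₀, hmin⟩ := pairs.exists_min_image δ pairs.toFinite ⟨(z₀, z₀), 0, h₀, h₀⟩
  exact ⟨K, δ p₀, hKpos, hδ p₀ hp₀, fun s u v hu hv => hmin (u, v) ⟨s, hu, hv⟩⟩

/-- By `scaledSurvival_add`, `K` more steps average `scaledSurvival` against `doobKernel K`, whose
rows from states reached at a common time overlap by at least `ε`; so the oscillation over such
states shrinks by the factor `1 - ε`. -/
theorem scaledSurvival_sub_le {K : ℕ} {ε C : ℝ}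
    (hoverlap : ∀ s u v, 0 < kpow Q s z₀ u → 0 < kpow Q s z₀ v →
      ε ≤ ∑ w, min (doobKernel Q ρ ξ K u w) (doobKernel Q ρ ξ K v w))
    (hC : ∀ n z, 0 < kpow Q n z₀ z → ∀ m, scaledSurvival Q ρ ξ m z ≤ C) (t : ℕ) :
    ∀ s m u v, 0 < kpow Q s z₀ u → 0 < kpow Q s z₀ v →
      scaledSurvival Q ρ ξ (t * K + m) u - scaledSurvival Q ρ ξ (t * K + m) v ≤
        (1 - ε) ^ t * C := by
  induction t with
  | zero =>
    intro s m u v hu hv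
    simpa using sub_le_sub (hC s u hu m) (H.scaledSurvival_nonneg hv m)
  | succ t ih =>
    intro s m u v hu hv
    classical
    rw [show (t + 1) * K + m = K + (t * K + m) by ring, H.scaledSurvival_add hu,
      H.scaledSurvival_add hv, pow_succ', mul_assoc]
    exact sum_mul_sub_sum_mul_le_of_overlap (T := Finset.univ.filter (0 < kpow Q (s + K) z₀ ·))
      (H.doobKernel_nonneg hu K) (H.doobKernel_nonneg hv K) (H.sum_doobKernel hu K)
      (H.sum_doobKernel hv K)
      (fun w hw => by simpa using H.reach_of_doobKernel_ne_zero hu hw)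
      (fun w hw => by simpa using H.reach_of_doobKernel_ne_zero hv hw)
      (fun i hi j hj => ih (s + K) m i j (by simpa using hi) (by simpa using hj))
      (hoverlap s u v hu hv)

theorem tendsto_scaledSurvival_sub {n : ℕ} {u v : S} (hu : 0 < kpow Q n z₀ u)
    (hv : 0 < kpow Q n z₀ v) :
    Tendsto (fun m => scaledSurvival Q ρ ξ m u - scaledSurvival Q ρ ξ m v) atTop (𝓝 0) := by
  obtain ⟨K, ε, hK, hε, hoverlap⟩ := H.exists_uniform_overlap
  obtain ⟨c, C, -, hmem⟩ := H.exists_scaledSurvival_mem_Icc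
  have h₀ : 0 < kpow Q 0 z₀ z₀ := by simp [kpow.zero_apply]
  have hε1 : ε ≤ 1 := by
    simpa [H.sum_doobKernel h₀] using hoverlap 0 z₀ z₀ h₀ h₀
  have hC : ∀ n z, 0 < kpow Q n z₀ z → ∀ m, scaledSurvival Q ρ ξ m z ≤ C :=
    fun n z hz m => (hmem n z hz m).2
  have hbound : ∀ m, ‖scaledSurvival Q ρ ξ m u - scaledSurvival Q ρ ξ m v‖ ≤
      (1 - ε) ^ (m / K) * C := fun m => by
    have key := H.scaledSurvival_sub_le hoverlap hC (m / K) n (m % K)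
    simp only [Nat.div_add_mod'] at key
    rw [Real.norm_eq_abs, abs_sub_le_iff]
    exact ⟨key u v hu hv, key v u hv hu⟩
  refine squeeze_zero_norm hbound ?_
  simpa using ((tendsto_pow_atTop_nhds_zero_of_lt_one (sub_nonneg.2 hε1) (sub_lt_self 1 hε)).comp
    (Nat.tendsto_div_const_atTop hK.ne')).mul_const C

theorem tendsto_survival_div {n : ℕ} {u : S} (hu : 0 < kpow Q n z₀ u) :
    Tendsto (fun m => survival Q m u / survival Q (m + n) z₀) atTop
      (𝓝 (ξ u / (ρ ^ n * ξ z₀))) := by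
  have h₀ : 0 < kpow Q 0 z₀ z₀ := by simp [kpow.zero_apply]
  obtain ⟨c, C, hc, hmem⟩ := H.exists_scaledSurvival_mem_Icc
  have hdiff : Tendsto (fun m => scaledSurvival Q ρ ξ (m + n) z₀ - scaledSurvival Q ρ ξ m u)
      atTop (𝓝 0) := by
    have hsum : ∀ m, scaledSurvival Q ρ ξ (m + n) z₀ - scaledSurvival Q ρ ξ m u =
        ∑ w, doobKernel Q ρ ξ n z₀ w * (scaledSurvival Q ρ ξ m w - scaledSurvival Q ρ ξ m u) :=
      fun m => by
        simp only [mul_sub, Finset.sum_sub_distrib, ← Finset.sum_mul, H.sum_doobKernel h₀,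
          one_mul, add_comm m n, H.scaledSurvival_add h₀]
    simp only [hsum]
    have hterm : ∀ w, Tendsto (fun m => doobKernel Q ρ ξ n z₀ w *
        (scaledSurvival Q ρ ξ m w - scaledSurvival Q ρ ξ m u)) atTop (𝓝 0) := fun w => by
      by_cases hw : doobKernel Q ρ ξ n z₀ w = 0
      · simp [hw]
      · simpa using (H.tendsto_scaledSurvival_sub
          (by simpa using H.reach_of_doobKernel_ne_zero h₀ hw) hu).const_mul
            (doobKernel Q ρ ξ n z₀ w)
    simpa using tendsto_finsetSum Finset.univ fun w _ => hterm w
  have hlow : ∀ m, c ≤ scaledSurvival Q ρ ξ (m + n) z₀ := fun m => (hmem 0 z₀ h₀ (m + n)).1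
  have hratio : Tendsto (fun m => scaledSurvival Q ρ ξ m u / scaledSurvival Q ρ ξ (m + n) z₀)
      atTop (𝓝 1) := by
    rw [← tendsto_sub_nhds_zero_iff]
    refine squeeze_zero_norm (fun m => ?_) (by simpa using hdiff.norm.div_const c)
    have ha := hc.trans_le (hlow m)
    rw [div_sub_one ha.ne', norm_div, norm_sub_rev, Real.norm_of_nonneg ha.le]
    exact div_le_div_of_nonneg_left (norm_nonneg _) hc (hlow m)
  have := H.pos; have := H.eigvec_pos _ _ hu; have := H.eigvec_pos _ _ h₀
  have heq : ∀ m, survival Q m u / survival Q (m + n) z₀ =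
      ξ u / (ρ ^ n * ξ z₀) * (scaledSurvival Q ρ ξ m u / scaledSurvival Q ρ ξ (m + n) z₀) :=
    fun m => by
      have hS : survival Q (m + n) z₀ ≠ 0 := by
        have := hc.trans_le (hlow m)
        unfold scaledSurvival at this
        exact (div_pos_iff_of_pos_right (by positivity)).1 this |>.ne'
      unfold scaledSurvival
      field_simp
      ring
  simpa [heq] using hratio.const_mul (ξ u / (ρ ^ n * ξ z₀))

end IsPerronVector

end Perron

section PathWeight

variable [Fintype E] [DecidableEq E]

noncomputable def pathWeight (P : E → E → ℝ) (c : ℕ → E → Prop) [∀ i, DecidablePred (c i)]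
    (m : ℕ) (b : E) : ℝ :=
  ∑ ω : Fin (m + 1) → E, if (∀ i : Fin (m + 1), c i (ω i)) ∧ ω (Fin.last m) = b then
    ∏ i : Fin m, P (ω i.castSucc) (ω i.succ) else 0

variable (P : E → E → ℝ) (c : ℕ → E → Prop) [∀ i, DecidablePred (c i)]

theorem pathWeight_zero (b : E) : pathWeight P c 0 b = if c 0 b then 1 else 0 := by
  rw [pathWeight, ← (Equiv.funUnique (Fin 1) E).symm.sum_comp]
  simp only [Equiv.funUnique_symm_apply, Fin.prod_univ_zero]
  simp [and_comm, ite_and]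

theorem pathWeight_succ (m : ℕ) (b : E) :
    pathWeight P c (m + 1) b = if c (m + 1) b then ∑ v, pathWeight P c m v * P v b else 0 := by
  rw [pathWeight, ← (Fin.snocEquiv fun _ => E).sum_comp, Fintype.sum_prod_type]
  simp only [Fin.snocEquiv_apply, Fin.forall_fin_succ' (n := m + 1), Fin.snoc_castSucc,
    Fin.snoc_last, Fin.prod_univ_castSucc, Fin.succ_last, Fin.succ_castSucc, Fin.val_last,
    Fin.val_castSucc]
  rw [Finset.sum_eq_single b (fun v _ hv => by simp [hv]) (by simp)]
  split_ifs with hb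
  · simp only [pathWeight, Finset.sum_mul, ite_mul, zero_mul]
    rw [Finset.sum_comm]
    refine Finset.sum_congr rfl fun ω _ => ?_
    simp [hb, ite_and, Finset.sum_ite_eq]
  · simp [hb]

end PathWeight

theorem pathWeight_eq_zero [Fintype E] [DecidableEq E] (P : E → E → ℝ) {c : ℕ → E → Prop}
    [∀ i, DecidablePred (c i)] {m : ℕ} {b : E} (hb : ¬ c m b) : pathWeight P c m b = 0 := by
  cases m with
  | zero => simp [pathWeight_zero, hb]
  | succ m => simp [pathWeight_succ, hb]

section QY

variable [Fintype E] [DecidableEq E] (P : E → E → ℝ) (A : ℕ → Finset E) {γ : ℕ}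

theorem QY_nonneg (hP : ∀ x y, 0 ≤ P x y) (a b : E × ZMod γ) : 0 ≤ QY P A γ a b := by
  unfold QY; split_ifs <;> simp [hP]

theorem QY_natCast (hper : Function.Periodic A γ) (u v : E) (j : ℕ) :
    QY P A γ (u, (j : ZMod γ)) (v, ((j + 1 : ℕ) : ZMod γ)) =
      if u ∉ A j ∧ v ∉ A (j + 1) then P u v else 0 := by
  simp only [QY, ZMod.val_natCast, hper.map_mod_nat]
  simp only [Nat.cast_succ, and_true]

theorem snd_eq_of_QY_ne_zero {a b : E × ZMod γ} (h : QY P A γ a b ≠ 0) : b.2 = a.2 + 1 := by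
  by_contra hb
  exact h (by simp [QY, hb])

theorem snd_eq_of_kpow_QY_ne_zero [NeZero γ] {j : ℕ} {a b : E × ZMod γ}
    (h : kpow (QY P A γ) j a b ≠ 0) : b.2 = a.2 + j := by
  induction j generalizing b with
  | zero =>
    obtain rfl : a = b := by by_contra hab; simp [kpow.zero_apply, hab] at h
    simp
  | succ j ih =>
    obtain ⟨c, -, hc⟩ := Finset.exists_ne_zero_of_sum_ne_zero h
    rw [snd_eq_of_QY_ne_zero P A (right_ne_zero_of_mul hc), ih (left_ne_zero_of_mul hc)]
    push_cast
    ring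

theorem kpow_QY_succ_natCast [NeZero γ] (a : E × ZMod γ) (j k : ℕ) (y : E) :
    kpow (QY P A γ) (j + 1) a (y, ((k + 1 : ℕ) : ZMod γ)) =
      ∑ v, kpow (QY P A γ) j a (v, (k : ZMod γ)) *
        QY P A γ (v, (k : ZMod γ)) (y, ((k + 1 : ℕ) : ZMod γ)) := by
  rw [kpow.succ_apply, Fintype.sum_prod_type]
  refine Finset.sum_congr rfl fun v _ => Finset.sum_eq_single _ (fun t _ ht => ?_) (by simp)
  have : QY P A γ (v, t) (y, ((k + 1 : ℕ) : ZMod γ)) = 0 := by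
    by_contra h
    exact ht (by simpa using (snd_eq_of_QY_ne_zero P A h).symm)
  rw [this, mul_zero]

theorem survival_QY [NeZero γ] (e : E) (n m : ℕ) :
    survival (QY P A γ) m (e, (n : ZMod γ)) =
      ∑ y, kpow (QY P A γ) m (e, (n : ZMod γ)) (y, ((m + n : ℕ) : ZMod γ)) := by
  rw [survival, Fintype.sum_prod_type]
  refine Finset.sum_congr rfl fun y _ => Finset.sum_eq_single _ (fun t _ ht => ?_) (by simp)
  by_contra h
  have ht' : t = n + m := snd_eq_of_kpow_QY_ne_zero P A h
  exact ht (by rw [ht']; push_cast; ring)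

end QY

section Cylinder

variable [DecidableEq E] (P : E → E → ℝ) (A : ℕ → Finset E) (q : ℕ → E) {γ : ℕ}

abbrev cylConstraint (n i : ℕ) (y : E) : Prop := (i ≤ n → y = q i) ∧ y ∉ A i

noncomputable def cylWeight (n : ℕ) : ℝ :=
  if ∀ i ≤ n, q i ∉ A i then ∏ i ∈ Finset.range n, P (q i) (q (i + 1)) else 0

theorem cylWeight_zero : cylWeight P A q 0 = if q 0 ∈ A 0 then 0 else 1 := by
  simp [cylWeight]

theorem cylWeight_succ (n : ℕ) :
    cylWeight P A q (n + 1) =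
      if q (n + 1) ∈ A (n + 1) then 0 else cylWeight P A q n * P (q n) (q (n + 1)) := by
  have hall : (∀ i ≤ n + 1, q i ∉ A i) ↔ (∀ i ≤ n, q i ∉ A i) ∧ q (n + 1) ∉ A (n + 1) := by
    simp only [← Nat.lt_add_one_iff, Nat.forall_lt_succ_right]
  by_cases h : ∀ i ≤ n, q i ∉ A i <;> by_cases hn : q (n + 1) ∈ A (n + 1) <;>
    simp [cylWeight, hall, h, hn, Finset.prod_range_succ]

theorem notMem_of_cylWeight_ne_zero {n : ℕ} (h : cylWeight P A q n ≠ 0) : q n ∉ A n := by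
  by_contra hn
  exact h (if_neg fun hall => hall n le_rfl hn)

theorem pathWeight_cylConstraint_of_le [Fintype E] {k n : ℕ} (hk : k ≤ n) (b : E) :
    pathWeight P (cylConstraint A q n) k b = if b = q k then cylWeight P A q k else 0 := by
  induction k generalizing b with
  | zero =>
    rw [pathWeight_zero, cylWeight_zero]
    by_cases hb : b = q 0 <;> simp [cylConstraint, hb]
  | succ k ih =>
    rw [pathWeight_succ, cylWeight_succ]
    simp only [ih (by omega), ite_mul, zero_mul, Finset.sum_ite_eq', Finset.mem_univ, if_true]
    by_cases hb : b = q (k + 1) <;> simp [cylConstraint, hb, hk]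

theorem pathWeight_cylConstraint_add [Fintype E] [NeZero γ] (hper : Function.Periodic A γ)
    (n m : ℕ) (y : E) :
    pathWeight P (cylConstraint A q n) (m + n) y =
      cylWeight P A q n * kpow (QY P A γ) m (q n, (n : ZMod γ)) (y, ((m + n : ℕ) : ZMod γ)) := by
  induction m generalizing y with
  | zero =>
    rw [Nat.zero_add, pathWeight_cylConstraint_of_le P A q le_rfl, kpow.zero_apply]
    by_cases hy : y = q n
    · simp [hy]
    · simp [hy, Ne.symm hy]
  | succ m ih =>
    rw [show m + 1 + n = m + n + 1 by ring, pathWeight_succ, kpow_QY_succ_natCast, Finset.mul_sum]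
    simp only [QY_natCast P A hper]
    have hlate : ¬ m + n + 1 ≤ n := by omega
    by_cases hy : y ∈ A (m + n + 1)
    · simp [cylConstraint, hy]
    · simp only [cylConstraint, hlate, false_imp_iff, true_and, hy, not_false_eq_true, if_true]
      refine Finset.sum_congr rfl fun v _ => ?_
      by_cases hv : v ∈ A (m + n)
      · simp [pathWeight_eq_zero, cylConstraint, hv]
      · simp [ih, hv, mul_assoc]

theorem cylProb_eq_sum_pathWeight [Fintype E] (n m : ℕ) :
    cylProb P A q n m = ∑ y, pathWeight P (cylConstraint A q n) m y := by
  simp only [cylProb, pathWeight]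
  rw [Finset.sum_comm]
  refine Finset.sum_congr rfl fun ω _ => ?_
  simp [ite_and, forall_and]

theorem cylProb_add [Fintype E] [NeZero γ] (hper : Function.Periodic A γ) (n m : ℕ) :
    cylProb P A q n (m + n) = cylWeight P A q n * survival (QY P A γ) m (q n, (n : ZMod γ)) := by
  simp only [cylProb_eq_sum_pathWeight, pathWeight_cylConstraint_add P A q hper, survival_QY,
    Finset.mul_sum]

theorem kpow_QY_pos_of_cylWeight_ne_zero [Fintype E] [NeZero γ] (hP : ∀ x y, 0 ≤ P x y)
    (hper : Function.Periodic A γ) {n : ℕ} (h : cylWeight P A q n ≠ 0) :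
    0 < kpow (QY P A γ) n (q 0, (0 : ZMod γ)) (q n, (n : ZMod γ)) := by
  induction n with
  | zero => simp [kpow.zero_apply]
  | succ n ih =>
    rw [cylWeight_succ] at h
    have hn1 : q (n + 1) ∉ A (n + 1) := fun hn1 => h (if_pos hn1)
    rw [if_neg hn1] at h
    have hn := notMem_of_cylWeight_ne_zero P A q (left_ne_zero_of_mul h)
    refine kpow.pos_succ (QY_nonneg P A hP) (ih (left_ne_zero_of_mul h)) ?_
    rw [QY_natCast P A hper, if_pos ⟨hn, hn1⟩]
    exact (hP _ _).lt_of_ne' (right_ne_zero_of_mul h)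

end Cylinder

theorem q_process_moving_boundary_general [Fintype E] [DecidableEq E]
    (P : E → E → ℝ) (hPnn : ∀ x y, 0 ≤ P x y)
    (γ : ℕ) [NeZero γ]
    (A : ℕ → Finset E) (hper : ∀ n : ℕ, A (n + γ) = A n)
    (x : E) (hx : x ∉ A 0)
    (D : Finset (E × ZMod γ))
    (hcomm : ∀ z ∈ D, (∃ n, 0 < kpow (QY P A γ) n (x, (0 : ZMod γ)) z) ∧
      ∃ m, 0 < kpow (QY P A γ) m z (x, (0 : ZMod γ)))
    (hreach : ∀ z, (∃ n, 0 < kpow (QY P A γ) n (x, (0 : ZMod γ)) z) → z ∈ D)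
    (ρ : ℝ) (hρ : 0 < ρ)
    (ξ : E × ZMod γ → ℝ) (hξpos : ∀ z ∈ D, 0 < ξ z)
    (hξeig : ∀ z ∈ D, ∑ w ∈ D, QY P A γ z w * ξ w = ρ * ξ z)
    (q : ℕ → E) (hq0 : q 0 = x) :
    (∀ n : ℕ,
      Tendsto (fun m : ℕ => cylProb P A q n m / cylProb P A q 0 m) atTop
        (nhds (qProcessCyl P A γ ρ ξ q n))) ∧
    (∀ n : ℕ, q n ∉ A n → q (n + 1) ∉ A (n + 1) →
      qProcessCyl P A γ ρ ξ q (n + 1) =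
        qProcessCyl P A γ ρ ξ q n *
          (ξ (q (n + 1), ((n + 1 : ℕ) : ZMod γ)) * P (q n) (q (n + 1))) /
            (ρ * ξ (q n, (n : ZMod γ)))) := by
  subst hq0
  have H : IsPerronVector (QY P A γ) (q 0, 0) ρ ξ := .of_class (QY_nonneg P A hPnn)
    (fun z hz => (hcomm z hz).2) hreach hρ hξpos hξeig
  have hqProcessCyl : ∀ n, qProcessCyl P A γ ρ ξ q n =
      cylWeight P A q n * ξ (q n, (n : ZMod γ)) / (ρ ^ n * ξ (q 0, 0)) := fun _ => rfl
  have hcylProb0 : ∀ m, cylProb P A q 0 m = survival (QY P A γ) m (q 0, 0) := fun m => by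
    simpa [cylWeight_zero, hx] using cylProb_add P A q hper 0 m
  refine ⟨fun n => ?_, fun n _ hn1 => ?_⟩
  · rw [← tendsto_add_atTop_iff_nat n, hqProcessCyl]
    simp only [cylProb_add P A q hper, hcylProb0, mul_div_assoc]
    by_cases hW : cylWeight P A q n = 0
    · simp [hW]
    · exact (H.tendsto_survival_div
        (kpow_QY_pos_of_cylWeight_ne_zero P A q hPnn hper hW)).const_mul _
  · rw [hqProcessCyl, hqProcessCyl, cylWeight_succ, if_neg hn1]
    by_cases hW : cylWeight P A q n = 0
    · simp [hW]
    · have := H.eigvec_pos _ _ (kpow_QY_pos_of_cylWeight_ne_zero P A q hPnn hper hW)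
      have := H.eigvec_pos 0 (q 0, 0) (by simp [kpow.zero_apply])
      field_simp
      ring

/-- Existence of the `Q`-process with a `γ`-periodically moving boundary: for every cylinder,
`P_x(X_1 = q 1, …, X_n = q n | τ > m)` converges as `m → ∞` to
`E_x[1_{X_1 = q 1, …, X_n = q n} 1_{τ > n} ξ(X_n, n̄)] / (ρ^n ξ(x, 0̄))`, and under the
limiting law `ℚ_x` the process is a time-inhomogeneous Markov chain with transition
probabilities `ℚ_x(X_n = z | X_{n-1} = y) = ξ(z, n̄) P_y(X_1 = z) / (ρ ξ(y, n-1̄))` for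
`y ∈ E_{n-1}`, `z ∈ E_n`.  Here `ρ` is the spectral radius and `ξ` a positive right Perron
eigenvector of the communicating class `D` of `(x, 0̄)` for the space-time chain
`Y_n = (X_n, n mod γ)` killed on `∂`, and every state reachable from `(x, 0̄)` before
absorption lies in `D`. -/
theorem q_process_moving_boundary [Fintype E] [DecidableEq E]
    (P : E → E → ℝ) (hPnn : ∀ x y, 0 ≤ P x y) (hPsum : ∀ x, ∑ y, P x y = 1)
    (γ : ℕ) [NeZero γ] (hγ : 2 ≤ γ)
    (A : ℕ → Finset E) (hper : ∀ n : ℕ, A (n + γ) = A n)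
    (habs : ∀ x ∉ A 0, Tendsto (fun n => ∑ y, mdist P A (dirac x) n y) atTop (nhds 0))
    (hirr : ∀ n : ℕ, ∀ x ∉ A n, ∀ y ∉ A n,
      ∃ m : ℕ, 0 < mdist P (fun _ => A n) (dirac x) m y)
    (x : E) (hx : x ∉ A 0)
    (D : Finset (E × ZMod γ)) (hxD : (x, (0 : ZMod γ)) ∈ D)
    (hcomm : ∀ z ∈ D, (∃ n, 0 < kpow (QY P A γ) n (x, (0 : ZMod γ)) z) ∧
      ∃ m, 0 < kpow (QY P A γ) m z (x, (0 : ZMod γ)))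
    (hreach : ∀ z, (∃ n, 0 < kpow (QY P A γ) n (x, (0 : ZMod γ)) z) → z ∈ D)
    (ρ : ℝ) (hρ : 0 < ρ)
    (ξ : E × ZMod γ → ℝ) (hξpos : ∀ z ∈ D, 0 < ξ z)
    (hξeig : ∀ z ∈ D, ∑ w ∈ D, QY P A γ z w * ξ w = ρ * ξ z)
    (q : ℕ → E) (hq0 : q 0 = x) :
    (∀ n : ℕ,
      Tendsto (fun m : ℕ => cylProb P A q n m / cylProb P A q 0 m) atTop
        (nhds (qProcessCyl P A γ ρ ξ q n))) ∧
    (∀ n : ℕ, q n ∉ A n → q (n + 1) ∉ A (n + 1) →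
      qProcessCyl P A γ ρ ξ q (n + 1) =
        qProcessCyl P A γ ρ ξ q n *
          (ξ (q (n + 1), ((n + 1 : ℕ) : ZMod γ)) * P (q n) (q (n + 1))) /
            (ρ * ξ (q n, (n : ZMod γ)))) :=
  q_process_moving_boundary_general P hPnn γ A hper x hx D hcomm hreach ρ hρ ξ hξpos hξeig q hq0
end
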